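/- Let A and B be commutative semisimple Fréchet algebras. Then A × B (with coordinatewise operations and product topology) is a BSE-algebra if and only if both A and B are BSE-algebras. -/

import Mathlib

open WeakDual Filter Topology Bornology

/-- A function `σ` on the character space of a commutative topological `ℂ`-algebra `A` is a
*BSE-function* if it is bounded and continuous and there are a von Neumann bounded set `M ⊆ A`
and a constant `β ≥ 0` such that `‖∑ cᵢ σ(φᵢ)‖ ≤ β ⬝ sup_{a ∈ M} ‖∑ cᵢ φᵢ(a)‖` for all finite
families of coefficients `cᵢ ∈ ℂ` and characters `φᵢ ∈ Δ(A)`. -/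
def IsBSEFunction {A : Type*} [NonUnitalCommRing A] [Module ℂ A] [TopologicalSpace A]
    (σ : characterSpace ℂ A → ℂ) : Prop :=
  Continuous σ ∧ (∃ C : ℝ, ∀ φ, ‖σ φ‖ ≤ C) ∧
    ∃ (M : Set A) (β : ℝ), 0 ≤ β ∧ IsVonNBounded ℂ M ∧
      ∀ (n : ℕ) (c : Fin n → ℂ) (φ : Fin n → characterSpace ℂ A),
        ‖∑ i, c i * σ (φ i)‖ ≤ β * ⨆ a ∈ M, ‖∑ i, c i * (φ i) a‖

/-- A *multiplier* of `A` is a continuous linear map `T : A → A` with `T (a*b) = a * T b`. -/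
def IsMultiplier {A : Type*} [NonUnitalCommRing A] [Module ℂ A] [TopologicalSpace A]
    (T : A →L[ℂ] A) : Prop :=
  ∀ a b : A, T (a * b) = a * T b

/-- A commutative topological `ℂ`-algebra is *semisimple* if the intersection of the kernels of
all its characters is `{0}`. -/
def IsSemisimple (A : Type*) [NonUnitalCommRing A] [Module ℂ A] [TopologicalSpace A] : Prop :=
  ∀ a : A, (∀ φ : characterSpace ℂ A, φ a = 0) → a = 0

/-- A commutative (semisimple) topological `ℂ`-algebra `A` is a *BSE-algebra* if every
multiplier of `A` has a BSE-function as Gelfand transform, and conversely every BSE-function on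
`Δ(A)` arises in this way from a multiplier of `A`. -/
def IsBSEAlgebra (A : Type*) [NonUnitalCommRing A] [Module ℂ A] [TopologicalSpace A] : Prop :=
  (∀ T : A →L[ℂ] A, IsMultiplier T →
      ∃ σ : characterSpace ℂ A → ℂ, IsBSEFunction σ ∧
        ∀ (φ : characterSpace ℂ A) (a : A), φ (T a) = σ φ * φ a) ∧
  (∀ σ : characterSpace ℂ A → ℂ, IsBSEFunction σ →
      ∃ T : A →L[ℂ] A, IsMultiplier T ∧
        ∀ (φ : characterSpace ℂ A) (a : A), φ (T a) = σ φ * φ a)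

/-- A (not necessarily unital) commutative topological `ℂ`-algebra is a *Fréchet algebra* if it
is complete and its topology is generated by a countable increasing family of submultiplicative
seminorms (hence it is a complete metrizable locally convex algebra). -/
def IsFrechetAlgebra (A : Type*) [NonUnitalCommRing A] [Module ℂ A]
    [UniformSpace A] : Prop :=
  ∃ p : ℕ → Seminorm ℂ A, WithSeminorms p ∧ Monotone p ∧
    (∀ (ℓ : ℕ) (x y : A), p ℓ (x * y) ≤ p ℓ x * p ℓ y) ∧ CompleteSpace A

/-!
Since `(a, 0) * (0, b) = 0`, every character of `A × B` vanishes on `A × 0` or on `0 × B`, so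
`Δ(A × B)` is the topological disjoint union of `Δ(A)` and `Δ(B)`. Along this splitting a
BSE-function on `Δ(A × B)` is a pair of BSE-functions on `Δ(A)` and `Δ(B)` (transport the
bounded sets by `fst` and `snd`, resp. take `(M_A × 0) ∪ (0 × M_B)`), and a multiplier `T` of
`A × B` is seen by the characters only through its corners `fst ∘ T ∘ inl` and `snd ∘ T ∘ inr`,
because a multiplier maps the kernel of each character into itself.
-/

open ContinuousLinearMap (fst snd inl inr)

@[simp] lemma WeakDual.zero_apply {𝕜 E : Type*} [CommSemiring 𝕜] [TopologicalSpace 𝕜]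
    [ContinuousAdd 𝕜] [ContinuousConstSMul 𝕜 𝕜] [AddCommMonoid E] [Module 𝕜 E]
    [TopologicalSpace E] (x : E) : (0 : WeakDual 𝕜 E) x = 0 :=
  rfl

namespace WeakDual.CharacterSpace

lemma comp_mem_characterSpace {A C : Type*} [NonUnitalNonAssocSemiring A] [Module ℂ A]
    [TopologicalSpace A] [NonUnitalNonAssocSemiring C] [Module ℂ C] [TopologicalSpace C]
    (χ : characterSpace ℂ C) {f : A →L[ℂ] C} (hf : ∀ x y, f (x * y) = f x * f y)
    (h : (toCLM χ).comp f ≠ 0) : (toCLM χ).comp f ∈ characterSpace ℂ A :=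
  ⟨h, fun x y => by change χ (f (x * y)) = χ (f x) * χ (f y); rw [hf, map_mul]⟩

section Prod

variable {A B : Type*} [NonUnitalNonAssocSemiring A] [Module ℂ A] [TopologicalSpace A]
  [NonUnitalNonAssocSemiring B] [Module ℂ B] [TopologicalSpace B]

noncomputable def compFst (φ : characterSpace ℂ A) : characterSpace ℂ (A × B) :=
  ⟨(toCLM φ).comp (fst ℂ A B),
    comp_mem_characterSpace φ (fun _ _ => rfl) fun h =>
      φ.prop.1 (ContinuousLinearMap.ext fun a => DFunLike.congr_fun h (a, 0))⟩

noncomputable def compSnd (ψ : characterSpace ℂ B) : characterSpace ℂ (A × B) :=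
  ⟨(toCLM ψ).comp (snd ℂ A B),
    comp_mem_characterSpace ψ (fun _ _ => rfl) fun h =>
      ψ.prop.1 (ContinuousLinearMap.ext fun b => DFunLike.congr_fun h (0, b))⟩

@[simp] lemma compFst_apply (φ : characterSpace ℂ A) (x : A × B) : compFst φ x = φ x.1 := rfl

@[simp] lemma compSnd_apply (ψ : characterSpace ℂ B) (x : A × B) : compSnd ψ x = ψ x.2 := rfl

noncomputable def compInl (χ : characterSpace ℂ (A × B)) : WeakDual ℂ A :=
  (toCLM χ).comp (inl ℂ A B)

noncomputable def compInr (χ : characterSpace ℂ (A × B)) : WeakDual ℂ B :=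
  (toCLM χ).comp (inr ℂ A B)

@[simp] lemma compInl_apply (χ : characterSpace ℂ (A × B)) (a : A) : compInl χ a = χ (a, 0) :=
  rfl

@[simp] lemma compInr_apply (χ : characterSpace ℂ (A × B)) (b : B) : compInr χ b = χ (0, b) :=
  rfl

lemma continuous_compFst :
    Continuous (compFst : characterSpace ℂ A → characterSpace ℂ (A × B)) :=
  (continuous_of_continuous_eval fun x =>
    (eval_continuous x.1).comp continuous_subtype_val).subtype_mk _

lemma continuous_compSnd :
    Continuous (compSnd : characterSpace ℂ B → characterSpace ℂ (A × B)) :=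
  (continuous_of_continuous_eval fun x =>
    (eval_continuous x.2).comp continuous_subtype_val).subtype_mk _

lemma continuous_compInl : Continuous (compInl : characterSpace ℂ (A × B) → WeakDual ℂ A) :=
  continuous_of_continuous_eval fun a => (eval_continuous (a, 0)).comp continuous_subtype_val

lemma continuous_compInr : Continuous (compInr : characterSpace ℂ (A × B) → WeakDual ℂ B) :=
  continuous_of_continuous_eval fun b => (eval_continuous (0, b)).comp continuous_subtype_val

lemma compInl_compFst (φ : characterSpace ℂ A) :
    compInl (compFst φ : characterSpace ℂ (A × B)) = φ :=
  rfl

lemma compInr_compSnd (ψ : characterSpace ℂ B) :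
    compInr (compSnd ψ : characterSpace ℂ (A × B)) = ψ :=
  rfl

lemma compInl_compSnd (ψ : characterSpace ℂ B) :
    compInl (compSnd ψ : characterSpace ℂ (A × B)) = 0 :=
  ContinuousLinearMap.ext fun _ => map_zero ψ

lemma apply_eq_compInl_add_compInr (χ : characterSpace ℂ (A × B)) (x : A × B) :
    χ x = compInl χ x.1 + compInr χ x.2 := by
  simp [← map_add]

lemma compInl_eq_zero_or_compInr_eq_zero (χ : characterSpace ℂ (A × B)) :
    compInl χ = 0 ∨ compInr χ = 0 := by
  by_contra! h
  obtain ⟨a, ha⟩ := DFunLike.ne_iff.1 h.1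
  obtain ⟨b, hb⟩ := DFunLike.ne_iff.1 h.2
  refine mul_ne_zero ha hb ?_
  simp [← map_mul, Prod.mk_zero_zero]

lemma exists_compFst_eq {χ : characterSpace ℂ (A × B)} (h : compInl χ ≠ 0) :
    ∃ φ : characterSpace ℂ A, (φ : WeakDual ℂ A) = compInl χ ∧ compFst φ = χ := by
  have hinr := (compInl_eq_zero_or_compInr_eq_zero χ).resolve_left h
  refine ⟨⟨compInl χ, comp_mem_characterSpace χ (fun x y => ?_) h⟩, rfl, ext fun x => ?_⟩
  · ext <;> simp
  · rw [apply_eq_compInl_add_compInr χ x, hinr, WeakDual.zero_apply, add_zero]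
    rfl

lemma exists_compSnd_eq {χ : characterSpace ℂ (A × B)} (h : compInr χ ≠ 0) :
    ∃ ψ : characterSpace ℂ B, (ψ : WeakDual ℂ B) = compInr χ ∧ compSnd ψ = χ := by
  have hinl := (compInl_eq_zero_or_compInr_eq_zero χ).resolve_right h
  refine ⟨⟨compInr χ, comp_mem_characterSpace χ (fun x y => ?_) h⟩, rfl, ext fun x => ?_⟩
  · ext <;> simp
  · rw [apply_eq_compInl_add_compInr χ x, hinl, WeakDual.zero_apply, zero_add]
    rfl

lemma isOpenMap_compFst :
    IsOpenMap (compFst : characterSpace ℂ A → characterSpace ℂ (A × B)) := by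
  intro V hV
  obtain ⟨O, hO, rfl⟩ := isOpen_induced_iff.1 hV
  convert (hO.inter isOpen_compl_singleton).preimage continuous_compInl
  ext χ
  constructor
  · rintro ⟨φ, hφ, rfl⟩
    exact ⟨hφ, φ.prop.1⟩
  · rintro ⟨hχO, hχ⟩
    obtain ⟨φ, hφ, rfl⟩ := exists_compFst_eq hχ
    exact ⟨φ, show (φ : WeakDual ℂ A) ∈ O from hφ ▸ hχO, rfl⟩

lemma isOpenMap_compSnd :
    IsOpenMap (compSnd : characterSpace ℂ B → characterSpace ℂ (A × B)) := by
  intro V hV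
  obtain ⟨O, hO, rfl⟩ := isOpen_induced_iff.1 hV
  convert (hO.inter isOpen_compl_singleton).preimage continuous_compInr
  ext χ
  constructor
  · rintro ⟨ψ, hψ, rfl⟩
    exact ⟨hψ, ψ.prop.1⟩
  · rintro ⟨hχO, hχ⟩
    obtain ⟨ψ, hψ, rfl⟩ := exists_compSnd_eq hχ
    exact ⟨ψ, show (ψ : WeakDual ℂ B) ∈ O from hψ ▸ hχO, rfl⟩

lemma injective_sumElim_compFst_compSnd :
    Function.Injective (Sum.elim compFst compSnd :
      characterSpace ℂ A ⊕ characterSpace ℂ B → characterSpace ℂ (A × B)) := by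
  refine Function.Injective.sumElim (fun φ φ' h => ?_) (fun ψ ψ' h => ?_) fun φ ψ h => ?_
  · exact Subtype.ext (by rw [← compInl_compFst (B := B) φ, h, compInl_compFst])
  · exact Subtype.ext (by rw [← compInr_compSnd (A := A) ψ, h, compInr_compSnd])
  · exact φ.prop.1 (by rw [← compInl_compFst (B := B) φ, h, compInl_compSnd])

lemma surjective_sumElim_compFst_compSnd :
    Function.Surjective (Sum.elim compFst compSnd :
      characterSpace ℂ A ⊕ characterSpace ℂ B → characterSpace ℂ (A × B)) := by
  intro χ
  by_cases h : compInl χ = 0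
  · have hinr : compInr χ ≠ 0 := fun hinr => χ.prop.1 <| ContinuousLinearMap.ext fun x =>
      (apply_eq_compInl_add_compInr χ x).trans (by simp [h, hinr]; rfl)
    obtain ⟨ψ, -, rfl⟩ := exists_compSnd_eq hinr
    exact ⟨.inr ψ, rfl⟩
  · obtain ⟨φ, -, rfl⟩ := exists_compFst_eq h
    exact ⟨.inl φ, rfl⟩

variable (A B) in
noncomputable def sumHomeomorphProd :
    characterSpace ℂ A ⊕ characterSpace ℂ B ≃ₜ characterSpace ℂ (A × B) :=
  (Equiv.ofBijective _ ⟨injective_sumElim_compFst_compSnd, surjective_sumElim_compFst_compSnd⟩)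
    |>.toHomeomorphOfContinuousOpen (continuous_compFst.sumElim continuous_compSnd)
      (isOpenMap_compFst.sumElim isOpenMap_compSnd)

@[simp] lemma sumHomeomorphProd_inl (φ : characterSpace ℂ A) :
    sumHomeomorphProd A B (.inl φ) = compFst φ :=
  rfl

@[simp] lemma sumHomeomorphProd_inr (ψ : characterSpace ℂ B) :
    sumHomeomorphProd A B (.inr ψ) = compSnd ψ :=
  rfl

@[simp] lemma sumHomeomorphProd_symm_compFst (φ : characterSpace ℂ A) :
    (sumHomeomorphProd A B).symm (compFst φ) = .inl φ :=
  (sumHomeomorphProd A B).symm_apply_eq.2 rfl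

@[simp] lemma sumHomeomorphProd_symm_compSnd (ψ : characterSpace ℂ B) :
    (sumHomeomorphProd A B).symm (compSnd ψ) = .inr ψ :=
  (sumHomeomorphProd A B).symm_apply_eq.2 rfl

end Prod

end WeakDual.CharacterSpace

lemma biSup_le_biSup_of_forall_exists_le {X Y : Type*} {M : Set X} {N : Set Y} {f : X → ℝ}
    {g : Y → ℝ} (hg₀ : ∀ y, 0 ≤ g y) (hg : BddAbove (g '' N))
    (h : ∀ x ∈ M, ∃ y ∈ N, f x ≤ g y) : ⨆ x ∈ M, f x ≤ ⨆ y ∈ N, g y := by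
  have hN₀ : 0 ≤ ⨆ y ∈ N, g y := Real.iSup_nonneg fun y => Real.iSup_nonneg fun _ => hg₀ y
  refine Real.iSup_le (fun x => Real.iSup_le (fun hx => ?_) hN₀) hN₀
  obtain ⟨y, hy, hxy⟩ := h x hx
  obtain ⟨r, hr⟩ := hg
  refine hxy.trans (le_ciSup₂ (f := fun y (_ : y ∈ N) => g y) ⟨r, ?_⟩ y hy)
  rintro _ ⟨_, ⟨y', rfl⟩, hy', rfl⟩
  exact hr ⟨y', hy', rfl⟩

lemma bddAbove_norm_sum_mul_apply {A : Type*} [NonUnitalNonAssocRing A] [Module ℂ A]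
    [TopologicalSpace A] {M : Set A} (hM : IsVonNBounded ℂ M) {ι : Type*} [Fintype ι]
    (c : ι → ℂ) (φ : ι → characterSpace ℂ A) :
    BddAbove ((fun a => ‖∑ i, c i * φ i a‖) '' M) := by
  obtain ⟨r, hr⟩ :=
    (NormedSpace.isVonNBounded_iff' ℂ).1 (hM.image (∑ i, c i • CharacterSpace.toCLM (φ i)))
  refine ⟨r, ?_⟩
  rintro _ ⟨a, ha, rfl⟩
  simpa using hr _ ⟨a, ha, rfl⟩

namespace IsBSEFunction

variable {A C : Type*} [NonUnitalCommRing A] [Module ℂ A] [TopologicalSpace A]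
  [NonUnitalCommRing C] [Module ℂ C] [TopologicalSpace C]

lemma zero : IsBSEFunction (0 : characterSpace ℂ A → ℂ) :=
  ⟨continuous_const, ⟨0, fun _ => by simp⟩, ∅, 0, le_rfl, isVonNBounded_empty ℂ A,
    fun _ _ _ => by simp⟩

lemma add {σ τ : characterSpace ℂ A → ℂ} (hσ : IsBSEFunction σ) (hτ : IsBSEFunction τ) :
    IsBSEFunction (σ + τ) := by
  obtain ⟨hσc, ⟨K, hK⟩, M, β, hβ, hM, hσ⟩ := hσ
  obtain ⟨hτc, ⟨L, hL⟩, N, γ, hγ, hN, hτ⟩ := hτ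
  refine ⟨hσc.add hτc, ⟨K + L, fun φ => (norm_add_le _ _).trans (add_le_add (hK φ) (hL φ))⟩,
    M ∪ N, β + γ, add_nonneg hβ hγ, hM.union hN, fun n c φ => ?_⟩
  have hmono : ∀ P ⊆ M ∪ N,
      ⨆ a ∈ P, ‖∑ i, c i * φ i a‖ ≤ ⨆ a ∈ M ∪ N, ‖∑ i, c i * φ i a‖ := fun P hP =>
    biSup_le_biSup_of_forall_exists_le (fun _ => norm_nonneg _)
      (bddAbove_norm_sum_mul_apply (hM.union hN) c φ) fun a ha => ⟨a, hP ha, le_rfl⟩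
  calc ‖∑ i, c i * (σ + τ) (φ i)‖
      = ‖∑ i, c i * σ (φ i) + ∑ i, c i * τ (φ i)‖ := by
        simp [mul_add, Finset.sum_add_distrib]
    _ ≤ β * (⨆ a ∈ M, ‖∑ i, c i * φ i a‖) + γ * ⨆ a ∈ N, ‖∑ i, c i * φ i a‖ :=
        (norm_add_le _ _).trans (add_le_add (hσ n c φ) (hτ n c φ))
    _ ≤ (β + γ) * ⨆ a ∈ M ∪ N, ‖∑ i, c i * φ i a‖ := by
        rw [add_mul]
        exact add_le_add (mul_le_mul_of_nonneg_left (hmono M Set.subset_union_left) hβ)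
          (mul_le_mul_of_nonneg_left (hmono N Set.subset_union_right) hγ)

lemma comp {σ : characterSpace ℂ C → ℂ} (hσ : IsBSEFunction σ)
    {f : characterSpace ℂ A → characterSpace ℂ C} (hf : Continuous f) (π : C →L[ℂ] A)
    (hπ : ∀ φ x, f φ x = φ (π x)) : IsBSEFunction (σ ∘ f) := by
  obtain ⟨hσc, ⟨K, hK⟩, M, β, hβ, hM, hσ⟩ := hσ
  refine ⟨hσc.comp hf, ⟨K, fun φ => hK (f φ)⟩, π '' M, β, hβ, hM.image π,
    fun n c φ => ?_⟩
  refine (hσ n c (f ∘ φ)).trans (mul_le_mul_of_nonneg_left ?_ hβ)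
  refine biSup_le_biSup_of_forall_exists_le (fun _ => norm_nonneg _)
    (bddAbove_norm_sum_mul_apply (hM.image π) c φ) fun x hx => ⟨π x, ⟨x, hx, rfl⟩, ?_⟩
  simp [hπ]

lemma norm_sum_mul_sumElim_zero_le {σ : characterSpace ℂ A → ℂ} {M : Set A} {β : ℝ}
    (hβ : 0 ≤ β) (hσ : ∀ (n : ℕ) (c : Fin n → ℂ) (φ : Fin n → characterSpace ℂ A),
      ‖∑ i, c i * σ (φ i)‖ ≤ β * ⨆ a ∈ M, ‖∑ i, c i * (φ i) a‖)
    {Y : Type*} {n : ℕ} (c : Fin n → ℂ) (ξ : Fin n → characterSpace ℂ A ⊕ Y) :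
    ‖∑ i, c i * Sum.elim σ 0 (ξ i)‖ ≤
      β * ⨆ a ∈ M, ‖∑ i, c i * Sum.elim (fun φ : characterSpace ℂ A => φ a) 0 (ξ i)‖ := by
  rcases isEmpty_or_nonempty (characterSpace ℂ A) with hA | ⟨⟨φ₀⟩⟩
  · have hξ : ∀ i, Sum.elim σ 0 (ξ i) = 0 := fun i => by
      rcases ξ i with φ | y
      exacts [isEmptyElim φ, rfl]
    simp only [hξ, mul_zero, Finset.sum_const_zero, norm_zero]
    exact mul_nonneg hβ (Real.iSup_nonneg fun _ => Real.iSup_nonneg fun _ => norm_nonneg _)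
  -- the entries of `ξ` in `Y` are replaced by `φ₀`, with coefficient `0`
  let c' i := Sum.elim (fun _ => c i) 0 (ξ i)
  let φ' i := Sum.elim id (fun _ => φ₀) (ξ i)
  have hσ' : ∀ i, c i * Sum.elim σ 0 (ξ i) = c' i * σ (φ' i) := fun i => by
    rcases h : ξ i with φ | y <;> simp [c', φ', h]
  have heval : ∀ a i, c i * Sum.elim (fun φ : characterSpace ℂ A => φ a) 0 (ξ i) =
      c' i * φ' i a := fun a i => by
    rcases h : ξ i with φ | y <;> simp [c', φ', h]
  simpa only [hσ', heval] using hσ n c' φ'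

lemma sumElim_zero_comp {σ : characterSpace ℂ A → ℂ} (hσ : IsBSEFunction σ) {Y : Type*}
    [TopologicalSpace Y] {g : characterSpace ℂ C → characterSpace ℂ A ⊕ Y}
    (hg : Continuous g) (ι : A →L[ℂ] C)
    (hι : ∀ χ a, χ (ι a) = Sum.elim (fun φ : characterSpace ℂ A => φ a) 0 (g χ)) :
    IsBSEFunction (Sum.elim σ 0 ∘ g) := by
  obtain ⟨hσc, ⟨K, hK⟩, M, β, hβ, hM, hσ⟩ := hσ
  refine ⟨(hσc.sumElim continuous_const).comp hg, ⟨max K 0, fun χ => ?_⟩, ι '' M, β, hβ,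
    hM.image ι, fun n c χ => ?_⟩
  · rcases h : g χ with φ | y <;>
      simp only [Function.comp_apply, h, Sum.elim_inl, Sum.elim_inr]
    exacts [(hK φ).trans (le_max_left _ _), by simp]
  refine (norm_sum_mul_sumElim_zero_le hβ hσ c (g ∘ χ)).trans
    (mul_le_mul_of_nonneg_left ?_ hβ)
  refine biSup_le_biSup_of_forall_exists_le (fun _ => norm_nonneg _)
    (bddAbove_norm_sum_mul_apply (hM.image ι) c χ) fun a ha => ⟨ι a, ⟨a, ha, rfl⟩, ?_⟩
  simp [hι]

open WeakDual.CharacterSpace in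
lemma sumElim_comp_sumHomeomorphProd_symm {A B : Type*} [NonUnitalCommRing A] [Module ℂ A]
    [TopologicalSpace A] [NonUnitalCommRing B] [Module ℂ B] [TopologicalSpace B]
    {σA : characterSpace ℂ A → ℂ} {σB : characterSpace ℂ B → ℂ}
    (hA : IsBSEFunction σA) (hB : IsBSEFunction σB) :
    IsBSEFunction (Sum.elim σA σB ∘ ⇑(sumHomeomorphProd A B).symm) := by
  have hsplit : Sum.elim σA σB ∘ ⇑(sumHomeomorphProd A B).symm =
      Sum.elim σA 0 ∘ ⇑(sumHomeomorphProd A B).symm +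
        Sum.elim σB 0 ∘ (Sum.swap ∘ ⇑(sumHomeomorphProd A B).symm) := by
    funext χ
    obtain ⟨ξ | ξ, rfl⟩ := (sumHomeomorphProd A B).surjective χ <;> simp
  rw [hsplit]
  refine (hA.sumElim_zero_comp (sumHomeomorphProd A B).symm.continuous
    (inl ℂ A B) fun χ a => ?_).add
    (hB.sumElim_zero_comp (continuous_sum_swap.comp (sumHomeomorphProd A B).symm.continuous)
      (inr ℂ A B) fun χ b => ?_)
  all_goals obtain ⟨ξ | ξ, rfl⟩ := (sumHomeomorphProd A B).surjective χ <;> simp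

end IsBSEFunction

namespace IsMultiplier

variable {A B : Type*} [NonUnitalCommRing A] [Module ℂ A] [TopologicalSpace A]
  [NonUnitalCommRing B] [Module ℂ B] [TopologicalSpace B]

lemma zero : IsMultiplier (0 : A →L[ℂ] A) := fun _ _ => by simp

lemma prodMap {TA : A →L[ℂ] A} {TB : B →L[ℂ] B} (hTA : IsMultiplier TA)
    (hTB : IsMultiplier TB) : IsMultiplier (TA.prodMap TB) :=
  fun x y => Prod.ext (hTA x.1 y.1) (hTB x.2 y.2)

lemma fst_comp_comp_inl {T : A × B →L[ℂ] A × B} (hT : IsMultiplier T) :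
    IsMultiplier (fst ℂ A B ∘L T ∘L inl ℂ A B) :=
  fun a a' => by simpa using congr_arg Prod.fst (hT (a, 0) (a', 0))

lemma snd_comp_comp_inr {T : A × B →L[ℂ] A × B} (hT : IsMultiplier T) :
    IsMultiplier (snd ℂ A B ∘L T ∘L inr ℂ A B) :=
  fun b b' => by simpa using congr_arg Prod.snd (hT (0, b) (0, b'))

lemma apply_eq_zero {T : A →L[ℂ] A} (hT : IsMultiplier T) (χ : characterSpace ℂ A) {x : A}
    (hx : χ x = 0) : χ (T x) = 0 := by
  obtain ⟨y, hy⟩ : ∃ y, χ y ≠ 0 := by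
    by_contra! h
    exact χ.prop.1 (ContinuousLinearMap.ext h)
  have hcomm : χ (T x) * χ y = χ x * χ (T y) := by
    rw [← map_mul, ← map_mul, mul_comm (T x), ← hT, mul_comm y, hT]
  exact (mul_eq_zero.1 (hcomm.trans (by rw [hx, zero_mul]))).resolve_right hy

open WeakDual.CharacterSpace

lemma compFst_apply_apply {T : A × B →L[ℂ] A × B} (hT : IsMultiplier T)
    (φ : characterSpace ℂ A) (x : A × B) :
    compFst φ (T x) = φ ((fst ℂ A B ∘L T ∘L inl ℂ A B) x.1) := by
  have h₀ : compFst φ (T (0, x.2)) = 0 := hT.apply_eq_zero _ (by simp)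
  calc compFst φ (T x) = compFst φ (T ((x.1, 0) + (0, x.2))) := by simp
    _ = _ := by rw [map_add, map_add, h₀, add_zero]; rfl

lemma compSnd_apply_apply {T : A × B →L[ℂ] A × B} (hT : IsMultiplier T)
    (ψ : characterSpace ℂ B) (x : A × B) :
    compSnd ψ (T x) = ψ ((snd ℂ A B ∘L T ∘L inr ℂ A B) x.2) := by
  have h₀ : compSnd ψ (T (x.1, 0)) = 0 := hT.apply_eq_zero _ (by simp)
  calc compSnd ψ (T x) = compSnd ψ (T ((x.1, 0) + (0, x.2))) := by simp
    _ = _ := by rw [map_add, map_add, h₀, zero_add]; rfl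

end IsMultiplier

namespace IsBSEAlgebra

open WeakDual.CharacterSpace

variable {A B : Type*} [NonUnitalCommRing A] [Module ℂ A] [TopologicalSpace A]
  [NonUnitalCommRing B] [Module ℂ B] [TopologicalSpace B]

lemma of_prod_left (h : IsBSEAlgebra (A × B)) : IsBSEAlgebra A := by
  refine ⟨fun TA hTA => ?_, fun σA hσA => ?_⟩
  · obtain ⟨σ, hσ, hσT⟩ := h.1 _ (hTA.prodMap (IsMultiplier.zero (A := B)))
    exact ⟨σ ∘ compFst, hσ.comp continuous_compFst (fst ℂ A B) fun _ _ => rfl,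
      fun φ a => by simpa using hσT (compFst φ) (a, 0)⟩
  · obtain ⟨T, hT, hσT⟩ :=
      h.2 _ (hσA.sumElim_comp_sumHomeomorphProd_symm (IsBSEFunction.zero (A := B)))
    exact ⟨_, hT.fst_comp_comp_inl, fun φ a => by simpa using hσT (compFst φ) (a, 0)⟩

lemma of_prod_right (h : IsBSEAlgebra (A × B)) : IsBSEAlgebra B := by
  refine ⟨fun TB hTB => ?_, fun σB hσB => ?_⟩
  · obtain ⟨σ, hσ, hσT⟩ := h.1 _ ((IsMultiplier.zero (A := A)).prodMap hTB)
    exact ⟨σ ∘ compSnd, hσ.comp continuous_compSnd (snd ℂ A B) fun _ _ => rfl,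
      fun ψ b => by simpa using hσT (compSnd ψ) (0, b)⟩
  · obtain ⟨T, hT, hσT⟩ :=
      h.2 _ ((IsBSEFunction.zero (A := A)).sumElim_comp_sumHomeomorphProd_symm hσB)
    exact ⟨_, hT.snd_comp_comp_inr, fun ψ b => by simpa using hσT (compSnd ψ) (0, b)⟩

lemma prod (hA : IsBSEAlgebra A) (hB : IsBSEAlgebra B) : IsBSEAlgebra (A × B) := by
  refine ⟨fun T hT => ?_, fun σ hσ => ?_⟩
  · obtain ⟨σA, hσA, hTA⟩ := hA.1 _ hT.fst_comp_comp_inl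
    obtain ⟨σB, hσB, hTB⟩ := hB.1 _ hT.snd_comp_comp_inr
    refine ⟨_, hσA.sumElim_comp_sumHomeomorphProd_symm hσB, fun χ x => ?_⟩
    obtain ⟨φ | ψ, rfl⟩ := (sumHomeomorphProd A B).surjective χ
    · simpa [hT.compFst_apply_apply] using hTA φ x.1
    · simpa [hT.compSnd_apply_apply] using hTB ψ x.2
  · obtain ⟨TA, hTA, hσA⟩ := hA.2 _ (hσ.comp continuous_compFst (fst ℂ A B) fun _ _ => rfl)
    obtain ⟨TB, hTB, hσB⟩ := hB.2 _ (hσ.comp continuous_compSnd (snd ℂ A B) fun _ _ => rfl)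
    refine ⟨_, hTA.prodMap hTB, fun χ x => ?_⟩
    obtain ⟨φ | ψ, rfl⟩ := (sumHomeomorphProd A B).surjective χ
    · simpa using hσA φ x.1
    · simpa using hσB ψ x.2

end IsBSEAlgebra

theorem isBSEAlgebra_prod_iff_general
    {A B : Type*}
    [NonUnitalCommRing A] [Module ℂ A]
    [UniformSpace A]
    [NonUnitalCommRing B] [Module ℂ B]
    [UniformSpace B] :
    IsBSEAlgebra (A × B) ↔ IsBSEAlgebra A ∧ IsBSEAlgebra B :=
  ⟨fun h => ⟨h.of_prod_left, h.of_prod_right⟩, fun h => h.1.prod h.2⟩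

/-- Let `A` and `B` be commutative semisimple Fréchet algebras.  Then `A × B`
(with coordinatewise operations and the product topology) is a BSE-algebra if and only if both
`A` and `B` are BSE-algebras. -/
theorem isBSEAlgebra_prod_iff
    {A B : Type*}
    [NonUnitalCommRing A] [Module ℂ A] [SMulCommClass ℂ A A] [IsScalarTower ℂ A A]
    [UniformSpace A] [IsUniformAddGroup A]
    [NonUnitalCommRing B] [Module ℂ B] [SMulCommClass ℂ B B] [IsScalarTower ℂ B B]
    [UniformSpace B] [IsUniformAddGroup B]
    (hA : IsFrechetAlgebra A) (hB : IsFrechetAlgebra B)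
    (hAss : IsSemisimple A) (hBss : IsSemisimple B) :
    IsBSEAlgebra (A × B) ↔ IsBSEAlgebra A ∧ IsBSEAlgebra B :=
  isBSEAlgebra_prod_iff_general
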